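/- arXiv:2012.02295 — 2 statements merged into one kernel-verified Lean document; each statement's English description precedes it below -/
import Mathlib

section
/- Let Ω be a nonempty finite type, let p¹, p⁻¹: Ω → ℝ be strictly positive functions, and let φ: ℝ → ℝ be such that for every μ ≥ 0 the set {−φ(α) − φ(−α)·μ : α ∈ ℝ} is bounded above. Then the infimum over all functions f: Ω → ℝ of ∑_{ω ∈ Ω} (φ(f(ω))·p¹(ω) + φ(−f(ω))·p⁻¹(ω)) equals −∑_{ω ∈ Ω} p¹(ω)·Δ(p⁻¹(ω)/p¹(ω)), where Δ(μ) = sup_{α ∈ ℝ} (−φ(α) − φ(−α)·μ). -/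
open Finset

/-- Claim 1, finite sample space. For a nonempty finite type `Ω`,
strictly positive `p¹, p⁻¹ : Ω → ℝ`, and `φ : ℝ → ℝ` such that
`{−φ(α) − φ(−α)·μ : α ∈ ℝ}` is bounded above for every `μ ≥ 0`, the infimum over
all `f : Ω → ℝ` of `∑ ω, (φ(f ω)·p¹ ω + φ(−f ω)·p⁻¹ ω)` equals
`−∑ ω, p¹ ω · Δ(p⁻¹ ω / p¹ ω)` where `Δ(μ) = sup_α (−φ(α) − φ(−α)·μ)`. -/
theorem stmt2 (Ω : Type*) [Fintype Ω] [Nonempty Ω] (p1 pm1 : Ω → ℝ)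
    (hp1 : ∀ ω, 0 < p1 ω) (hpm1 : ∀ ω, 0 < pm1 ω) (φ : ℝ → ℝ)
    (hbd : ∀ μ : ℝ, 0 ≤ μ → BddAbove {x : ℝ | ∃ α : ℝ, x = -φ α - φ (-α) * μ}) :
    sInf {x : ℝ | ∃ f : Ω → ℝ, x = ∑ ω, (φ (f ω) * p1 ω + φ (-(f ω)) * pm1 ω)} =
      -∑ ω, p1 ω * sSup {x : ℝ | ∃ α : ℝ, x = -φ α - φ (-α) * (pm1 ω / p1 ω)} := by
  set μ : Ω → ℝ := fun ω => pm1 ω / p1 ω with hμdef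
  have hμ0 : ∀ ω, 0 ≤ μ ω := fun ω => div_nonneg (hpm1 ω).le (hp1 ω).le
  set D : Ω → ℝ := fun ω => sSup {x : ℝ | ∃ α : ℝ, x = -φ α - φ (-α) * μ ω} with hDdef
  have hSne : ∀ ω, Set.Nonempty {x : ℝ | ∃ α : ℝ, x = -φ α - φ (-α) * μ ω} :=
    fun ω => ⟨-φ 0 - φ (-0) * μ ω, 0, rfl⟩
  have hSbd : ∀ ω, BddAbove {x : ℝ | ∃ α : ℝ, x = -φ α - φ (-α) * μ ω} :=
    fun ω => hbd _ (hμ0 ω)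
  have key : ∀ (g : ℝ) (ω : Ω),
      φ g * p1 ω + φ (-g) * pm1 ω = -((-φ g - φ (-g) * μ ω) * p1 ω) := by
    intro g ω
    have h : p1 ω ≠ 0 := (hp1 ω).ne'
    simp only [hμdef]
    field_simp [hμdef]
    ring
  set S : Set ℝ :=
    {x : ℝ | ∃ f : Ω → ℝ, x = ∑ ω, (φ (f ω) * p1 ω + φ (-(f ω)) * pm1 ω)} with hSdef
  have hlb : ∀ x ∈ S, -∑ ω, p1 ω * D ω ≤ x := by
    rintro x ⟨f, rfl⟩
    have : -∑ ω, p1 ω * D ω = ∑ ω : Ω, -(p1 ω * D ω) := by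
      rw [← Finset.sum_neg_distrib]
    rw [this]
    apply Finset.sum_le_sum
    intro ω _
    rw [key (f ω) ω]
    have hle : -φ (f ω) - φ (-(f ω)) * μ ω ≤ D ω :=
      le_csSup (hSbd ω) ⟨f ω, rfl⟩
    nlinarith [hp1 ω]
  have hSne' : S.Nonempty := ⟨_, fun _ => (0 : ℝ), rfl⟩
  have hSbb : BddBelow S := ⟨_, hlb⟩
  refine le_antisymm ?_ (le_csInf hSne' hlb)
  apply le_of_forall_pos_le_add
  intro ε hε
  have hsum : (0 : ℝ) < ∑ ω, p1 ω :=
    Finset.sum_pos (fun ω _ => hp1 ω) Finset.univ_nonempty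
  set δ : ℝ := ε / ∑ ω, p1 ω with hδdef
  have hδ : 0 < δ := div_pos hε hsum
  have hch : ∀ ω : Ω, ∃ α : ℝ, D ω - δ < -φ α - φ (-α) * μ ω := by
    intro ω
    obtain ⟨x, ⟨α, rfl⟩, hx⟩ := exists_lt_of_lt_csSup (hSne ω)
      (show D ω - δ < D ω by linarith)
    exact ⟨α, hx⟩
  choose α hα using hch
  have hmem : (∑ ω, (φ (α ω) * p1 ω + φ (-(α ω)) * pm1 ω)) ∈ S := ⟨α, rfl⟩
  have h1 : sInf S ≤ ∑ ω, (φ (α ω) * p1 ω + φ (-(α ω)) * pm1 ω) := csInf_le hSbb hmem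
  have h2 : ∑ ω, (φ (α ω) * p1 ω + φ (-(α ω)) * pm1 ω)
      ≤ ∑ ω, (-(p1 ω * D ω) + δ * p1 ω) := by
    apply Finset.sum_le_sum
    intro ω _
    rw [key (α ω) ω]
    have := hα ω
    nlinarith [hp1 ω]
  have h3 : ∑ ω, (-(p1 ω * D ω) + δ * p1 ω)
      = -∑ ω, p1 ω * D ω + ε := by
    rw [Finset.sum_add_distrib, ← Finset.sum_neg_distrib, ← Finset.mul_sum, hδdef,
      div_mul_cancel₀ _ hsum.ne']
  linarith
end

section
/- Let X be a nonempty compact metric space, c: X × X → ℝ a continuous function with c(x, y) ≥ 0 and c(x, x) = 0 for all x, y ∈ X, L: X → ℝ a continuous function, P* a Borel probability measure on X, and ρ > 0. For Borel probability measures P, Q on X, a coupling of P and Q is a probability measure γ on X × X whose first marginal is P and second marginal is Q, and the optimal-transport cost is W_c(P, Q) = inf over couplings γ of ∫ c dγ. Then sup over Borel probability measures P with W_c(P, P*) ≤ ρ of ∫_X L dP equals inf over α ≥ 0 of (α·ρ + ∫_X (max_{x ∈ X} (L(x) − α·c(x, x'))) dP*(x')). -/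
open MeasureTheory

/-- The optimal-transport cost `W_c(P, Q)`: the infimum over couplings `γ`
(probability measures on `X × X` with first marginal `P` and second marginal
`Q`) of `∫ c dγ`. -/
noncomputable def transportCost {X : Type*} [MeasurableSpace X]
    (c : X × X → ℝ) (P Q : Measure X) : ℝ :=
  sInf {w : ℝ | ∃ γ : Measure (X × X), IsProbabilityMeasure γ ∧
    γ.map Prod.fst = P ∧ γ.map Prod.snd = Q ∧ w = ∫ p, c p ∂γ}

section AuxST

variable {X : Type*} [MetricSpace X] [CompactSpace X] [Nonempty X]
    [MeasurableSpace X] [BorelSpace X]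

/-- continuous functions on compact spaces are integrable -/
lemma st9_cont_integrable {Y : Type*} [MetricSpace Y] [CompactSpace Y]
    [MeasurableSpace Y] [BorelSpace Y] {f : Y → ℝ} (hf : Continuous f)
    (μ : Measure Y) [IsFiniteMeasure μ] : Integrable f μ :=
  hf.integrable_of_hasCompactSupport (HasCompactSupport.of_compactSpace f)

/-- bounded measurable functions are integrable w.r.t. finite measures -/
lemma st9_bdd_integrable {Y : Type*} [MeasurableSpace Y] {f : Y → ℝ}
    (hf : Measurable f) {M : ℝ} (hb : ∀ y, |f y| ≤ M)
    (μ : Measure Y) [IsFiniteMeasure μ] : Integrable f μ :=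
  ⟨hf.aestronglyMeasurable,
    MeasureTheory.HasFiniteIntegral.of_bounded (C := M)
      (Filter.Eventually.of_forall fun y => by simpa using hb y)⟩

/-- global bound for a continuous function on a compact space -/
lemma st9_bound {f : X → ℝ} (hf : Continuous f) : ∃ M : ℝ, 0 ≤ M ∧ ∀ x, |f x| ≤ M := by
  obtain ⟨M, hM⟩ := isCompact_univ.exists_bound_of_continuousOn hf.continuousOn
  have hx : ∀ x, |f x| ≤ M := fun x => by simpa using hM x (Set.mem_univ x)
  exact ⟨M, le_trans (abs_nonneg _) (hx (Classical.arbitrary X)), hx⟩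

/-- a maximizer of a continuous function on a compact space -/
lemma st9_argmax {f : X → ℝ} (hf : Continuous f) : ∃ z, ∀ x, f x ≤ f z := by
  obtain ⟨z, -, hz⟩ := isCompact_univ.exists_isMaxOn Set.univ_nonempty hf.continuousOn
  exact ⟨z, fun x => hz (Set.mem_univ x)⟩

end AuxST

set_option linter.unusedSectionVars false

section TC

variable {X : Type*} [MetricSpace X] [CompactSpace X] [Nonempty X]
    [MeasurableSpace X] [BorelSpace X]
variable {c : X × X → ℝ} (hc : Continuous c) (hc0 : ∀ x y, 0 ≤ c (x, y))

lemma st9_c_nonneg (hc0 : ∀ x y, 0 ≤ c (x, y)) (p : X × X) : 0 ≤ c p := by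
  have := hc0 p.1 p.2; simpa using this

lemma st9_tc_bddBelow (hc0 : ∀ x y, 0 ≤ c (x, y)) (P Q : Measure X) :
    BddBelow {w : ℝ | ∃ γ : Measure (X × X), IsProbabilityMeasure γ ∧
      γ.map Prod.fst = P ∧ γ.map Prod.snd = Q ∧ w = ∫ p, c p ∂γ} := by
  refine ⟨0, fun w hw => ?_⟩
  obtain ⟨γ, hγ, -, -, rfl⟩ := hw
  exact integral_nonneg (st9_c_nonneg hc0)

lemma st9_tc_le (hc0 : ∀ x y, 0 ≤ c (x, y)) {P Q : Measure X}
    (γ : Measure (X × X)) (hγ : IsProbabilityMeasure γ)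
    (h1 : γ.map Prod.fst = P) (h2 : γ.map Prod.snd = Q) :
    transportCost c P Q ≤ ∫ p, c p ∂γ :=
  csInf_le (st9_tc_bddBelow hc0 P Q) ⟨γ, hγ, h1, h2, rfl⟩

lemma st9_tc_exists (hc : Continuous c) {P Q : Measure X} [IsProbabilityMeasure P]
    [IsProbabilityMeasure Q] {t ε : ℝ} (h : transportCost c P Q ≤ t) (hε : 0 < ε) :
    ∃ γ : Measure (X × X), IsProbabilityMeasure γ ∧
      γ.map Prod.fst = P ∧ γ.map Prod.snd = Q ∧ ∫ p, c p ∂γ < t + ε := by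
  have hne : {w : ℝ | ∃ γ : Measure (X × X), IsProbabilityMeasure γ ∧
      γ.map Prod.fst = P ∧ γ.map Prod.snd = Q ∧ w = ∫ p, c p ∂γ}.Nonempty := by
    refine ⟨∫ p, c p ∂(P.prod Q), P.prod Q, inferInstance, ?_, ?_, rfl⟩
    · simp [Measure.map_fst_prod]
    · simp [Measure.map_snd_prod]
  have h' : sInf {w : ℝ | ∃ γ : Measure (X × X), IsProbabilityMeasure γ ∧
      γ.map Prod.fst = P ∧ γ.map Prod.snd = Q ∧ w = ∫ p, c p ∂γ} ≤ t := h
  obtain ⟨w, hw, hlt⟩ := Real.lt_sInf_add_pos hne hε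
  obtain ⟨γ, hγ, h1, h2, rfl⟩ := hw
  exact ⟨γ, hγ, h1, h2, lt_of_lt_of_le hlt (by linarith)⟩

/-- the diagonal coupling -/
lemma st9_tc_self (hc : Continuous c) (hc0 : ∀ x y, 0 ≤ c (x, y)) (hcd : ∀ x, c (x, x) = 0)
    (P : Measure X) [IsProbabilityMeasure P] : transportCost c P P ≤ 0 := by
  have hmeas : Measurable fun x : X => (x, x) := by fun_prop
  have h1 : (P.map fun x => (x, x)).map Prod.fst = P := by
    rw [Measure.map_map measurable_fst hmeas]
    have : (Prod.fst ∘ fun x : X => (x, x)) = id := rfl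
    rw [this, Measure.map_id]
  have h2 : (P.map fun x => (x, x)).map Prod.snd = P := by
    rw [Measure.map_map measurable_snd hmeas]
    have : (Prod.snd ∘ fun x : X => (x, x)) = id := rfl
    rw [this, Measure.map_id]
  have hint : ∫ p, c p ∂(P.map fun x => (x, x)) = 0 := by
    rw [integral_map hmeas.aemeasurable]
    · simp [hcd]
    · exact hc.aestronglyMeasurable
  calc transportCost c P P ≤ ∫ p, c p ∂(P.map fun x => (x, x)) :=
        st9_tc_le hc0 _ (Measure.isProbabilityMeasure_map hmeas.aemeasurable) h1 h2
    _ = 0 := hint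

end TC

section G

variable {X : Type*} [MetricSpace X] [CompactSpace X] [Nonempty X]
    [MeasurableSpace X] [BorelSpace X]
variable {c : X × X → ℝ} {L : X → ℝ}

lemma st9_g_bddAbove (hc0 : ∀ x y, 0 ≤ c (x, y)) {M : ℝ} (hM : ∀ x, |L x| ≤ M)
    {α : ℝ} (hα : 0 ≤ α) (x' : X) :
    BddAbove (Set.range fun x => L x - α * c (x, x')) := by
  refine ⟨M, fun r hr => ?_⟩
  obtain ⟨x, rfl⟩ := hr
  dsimp only
  have h1 : L x ≤ M := le_trans (le_abs_self _) (hM x)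
  have h2 : 0 ≤ α * c (x, x') := mul_nonneg hα (hc0 x x')
  linarith

lemma st9_g_le (hc0 : ∀ x y, 0 ≤ c (x, y)) {M : ℝ} (hM : ∀ x, |L x| ≤ M)
    {α : ℝ} (hα : 0 ≤ α) (x' : X) :
    (⨆ x, (L x - α * c (x, x'))) ≤ M := by
  refine ciSup_le fun x => ?_
  have h1 : L x ≤ M := le_trans (le_abs_self _) (hM x)
  have h2 : 0 ≤ α * c (x, x') := mul_nonneg hα (hc0 x x')
  linarith

lemma st9_g_ge (hc0 : ∀ x y, 0 ≤ c (x, y)) (hcd : ∀ x, c (x, x) = 0)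
    {M : ℝ} (hM : ∀ x, |L x| ≤ M) {α : ℝ} (hα : 0 ≤ α) (x' : X) :
    L x' ≤ ⨆ x, (L x - α * c (x, x')) := by
  have := le_ciSup (st9_g_bddAbove hc0 hM hα x') x'
  simpa [hcd] using this

lemma st9_g_abs (hc0 : ∀ x y, 0 ≤ c (x, y)) (hcd : ∀ x, c (x, x) = 0)
    {M : ℝ} (hM : ∀ x, |L x| ≤ M) {α : ℝ} (hα : 0 ≤ α) (x' : X) :
    |⨆ x, (L x - α * c (x, x'))| ≤ M := by
  rw [abs_le]
  constructor
  · have := st9_g_ge hc0 hcd hM hα x'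
    have h2 := neg_abs_le (L x')
    have h3 := hM x'
    linarith
  · exact st9_g_le hc0 hM hα x'

lemma st9_g_meas (hc : Continuous c) (hL : Continuous L)
    (hc0 : ∀ x y, 0 ≤ c (x, y)) {M : ℝ} (hM : ∀ x, |L x| ≤ M) {α : ℝ} (hα : 0 ≤ α) :
    Measurable fun x' => ⨆ x, (L x - α * c (x, x')) := by
  have hls : LowerSemicontinuous fun x' => ⨆ x, (L x - α * c (x, x')) := by
    refine lowerSemicontinuous_ciSup (fun x' => st9_g_bddAbove hc0 hM hα x') (fun x => ?_)
    have : Continuous fun x' => L x - α * c (x, x') :=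
      continuous_const.sub (continuous_const.mul (hc.comp (Continuous.prodMk_right x)))
    exact this.lowerSemicontinuous
  exact hls.measurable

end G

section Net

variable {X : Type*} [MetricSpace X] [CompactSpace X] [Nonempty X]
    [MeasurableSpace X] [BorelSpace X]

/-- measurable selection of the argmax over a finite list -/
lemma st9_sel (F : X × X → ℝ) (hF : Continuous F) (l : List X) :
    ∃ T : X → X, Measurable T ∧ ∀ x', ∀ a ∈ l, F (a, x') ≤ F (T x', x') := by
  induction l with
  | nil => exact ⟨fun _ => Classical.arbitrary X, measurable_const, fun x' a ha => by simp at ha⟩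
  | cons a l ih =>
    obtain ⟨T, hT, hTle⟩ := ih
    set S : X → X := fun x' => if F (T x', x') < F (a, x') then a else T x' with hS
    have hFa : Measurable fun x' => F (a, x') :=
      (hF.comp (Continuous.prodMk_right a)).measurable
    have hFT : Measurable fun x' => F (T x', x') :=
      hF.measurable.comp (hT.prodMk measurable_id)
    have hSmeas : Measurable S := Measurable.ite (measurableSet_lt hFT hFa) measurable_const hT
    have hdom : ∀ x', F (T x', x') ≤ F (S x', x') := by
      intro x'
      by_cases h : F (T x', x') < F (a, x')
      · simp only [hS, if_pos h]; exact le_of_lt h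
      · simp only [hS, if_neg h]; exact le_rfl
    refine ⟨S, hSmeas, fun x' b hb => ?_⟩
    rcases List.mem_cons.mp hb with h | h
    · subst h
      by_cases h : F (T x', x') < F (b, x')
      · simp only [hS, if_pos h]; exact le_rfl
      · push_neg at h
        exact le_trans h (hdom x')
    · exact le_trans (hTle x' b h) (hdom x')

end Net

section Net2

variable {X : Type*} [MetricSpace X] [CompactSpace X] [Nonempty X]
    [MeasurableSpace X] [BorelSpace X]

lemma st9_net {c : X × X → ℝ} (hc : Continuous c) (hc0 : ∀ x y, 0 ≤ c (x, y))
    (hcd : ∀ x, c (x, x) = 0) {L : X → ℝ} (hL : Continuous L)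
    {M : ℝ} (hM : ∀ x, |L x| ≤ M)
    (Pstar : Measure X) [IsProbabilityMeasure Pstar] {α : ℝ} (hα : 0 ≤ α)
    {δ : ℝ} (hδ : 0 < δ) :
    ∃ (P : Measure X) (γ : Measure (X × X)), IsProbabilityMeasure P ∧
      IsProbabilityMeasure γ ∧ γ.map Prod.fst = P ∧ γ.map Prod.snd = Pstar ∧
      (∫ x', (⨆ x, (L x - α * c (x, x'))) ∂Pstar) - δ ≤
        (∫ x, L x ∂P) - α * ∫ p, c p ∂γ := by
  classical
  set F : X × X → ℝ := fun p => L p.1 - α * c p with hFdef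
  have hF : Continuous F := (hL.comp continuous_fst).sub (continuous_const.mul hc)
  have hUC : UniformContinuous F := CompactSpace.uniformContinuous_of_continuous hF
  obtain ⟨ε, hε, hclose⟩ := Metric.uniformContinuous_iff.mp hUC δ hδ
  obtain ⟨t, -, htfin, hcov⟩ := isCompact_univ.finite_cover_balls (s := (Set.univ : Set X)) hε
  set l : List X := htfin.toFinset.toList with hl
  have hmem : ∀ a, a ∈ t → a ∈ l := fun a ha => by
    simp [hl, Finset.mem_toList, Set.Finite.mem_toFinset, ha]
  obtain ⟨T, hT, hTdom⟩ := st9_sel F hF l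
  -- pointwise estimate
  have hpoint : ∀ x', (⨆ x, (L x - α * c (x, x'))) - δ ≤ F (T x', x') := by
    intro x'
    have hcont : Continuous fun x => F (x, x') :=
      hF.comp (continuous_id.prodMk continuous_const)
    obtain ⟨z, hz⟩ := st9_argmax hcont
    have hbdd : BddAbove (Set.range fun x => L x - α * c (x, x')) :=
      st9_g_bddAbove hc0 hM hα x'
    have hsup_eq : (⨆ x, (L x - α * c (x, x'))) = F (z, x') := by
      refine le_antisymm (ciSup_le fun x => hz x) (le_ciSup hbdd z)
    obtain ⟨a, ha, hball⟩ := Set.mem_iUnion₂.mp (hcov (Set.mem_univ z))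
    have hdistza : dist z a < ε := Metric.mem_ball.mp hball
    have hdist : dist ((z, x') : X × X) (a, x') < ε := by
      rw [Prod.dist_eq]
      simp only [dist_self]
      rw [max_eq_left dist_nonneg]
      exact hdistza
    have hFa : |F (z, x') - F (a, x')| < δ := by
      have := hclose hdist
      rwa [Real.dist_eq] at this
    have h1 : F (z, x') - δ ≤ F (a, x') := by
      have := abs_lt.mp hFa
      linarith [this.2]
    have h2 : F (a, x') ≤ F (T x', x') := hTdom x' a (hmem a ha)
    rw [hsup_eq]
    linarith
  -- measures
  have hmap : Measurable fun x' : X => (T x', x') := hT.prodMk measurable_id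
  refine ⟨Pstar.map T, Pstar.map (fun x' => (T x', x')),
    Measure.isProbabilityMeasure_map hT.aemeasurable,
    Measure.isProbabilityMeasure_map hmap.aemeasurable, ?_, ?_, ?_⟩
  · rw [Measure.map_map measurable_fst hmap]
    rfl
  · rw [Measure.map_map measurable_snd hmap]
    have : (Prod.snd ∘ fun x' : X => (T x', x')) = id := rfl
    rw [this, Measure.map_id]
  · obtain ⟨Mc, hMc0, hMc⟩ := st9_bound (X := X × X) hc
    have hintL : ∫ x, L x ∂(Pstar.map T) = ∫ x', L (T x') ∂Pstar :=
      integral_map hT.aemeasurable hL.aestronglyMeasurable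
    have hintc : ∫ p, c p ∂(Pstar.map fun x' => (T x', x')) = ∫ x', c (T x', x') ∂Pstar :=
      integral_map hmap.aemeasurable hc.aestronglyMeasurable
    have i1 : Integrable (fun x' => L (T x')) Pstar :=
      st9_bdd_integrable (hL.measurable.comp hT) (fun x' => hM (T x')) Pstar
    have i2 : Integrable (fun x' => c (T x', x')) Pstar :=
      st9_bdd_integrable (hc.measurable.comp hmap) (fun x' => hMc (T x', x')) Pstar
    have ig : Integrable (fun x' => ⨆ x, (L x - α * c (x, x'))) Pstar :=
      st9_bdd_integrable (st9_g_meas hc hL hc0 hM hα)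
        (fun x' => st9_g_abs hc0 hcd hM hα x') Pstar
    have key : ∫ x', ((⨆ x, (L x - α * c (x, x'))) - δ) ∂Pstar ≤
        ∫ x', (L (T x') - α * c (T x', x')) ∂Pstar := by
      refine integral_mono (ig.sub (integrable_const δ)) (i1.sub (i2.const_mul α)) ?_
      intro x'
      exact hpoint x'
    rw [integral_sub ig (integrable_const δ)] at key
    rw [integral_sub i1 (i2.const_mul α)] at key
    rw [integral_const] at key
    simp only [probReal_univ, measure_univ, ENNReal.toReal_one, one_smul, smul_eq_mul] at key
    rw [MeasureTheory.integral_const_mul] at key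
    rw [hintL, hintc]
    linarith
end Net2

section Mix

variable {X : Type*} [MetricSpace X] [CompactSpace X] [Nonempty X]
    [MeasurableSpace X] [BorelSpace X]

lemma st9_mix_prob {Y : Type*} [MeasurableSpace Y] (μ ν : Measure Y)
    (hμ : IsProbabilityMeasure μ) (hν : IsProbabilityMeasure ν)
    {θ : ℝ} (h0 : 0 ≤ θ) (h1 : θ ≤ 1) :
    IsProbabilityMeasure (ENNReal.ofReal θ • μ + ENNReal.ofReal (1 - θ) • ν) := by
  constructor
  rw [Measure.add_apply, Measure.smul_apply, Measure.smul_apply,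
    hμ.measure_univ, hν.measure_univ, smul_eq_mul, smul_eq_mul, mul_one, mul_one,
    ← ENNReal.ofReal_add h0 (by linarith)]
  norm_num

lemma st9_mix_int {Y : Type*} [MeasurableSpace Y] (f : Y → ℝ) (μ ν : Measure Y)
    (hfμ : Integrable f μ) (hfν : Integrable f ν)
    {θ : ℝ} (h0 : 0 ≤ θ) (h1 : θ ≤ 1) :
    ∫ y, f y ∂(ENNReal.ofReal θ • μ + ENNReal.ofReal (1 - θ) • ν) =
      θ * ∫ y, f y ∂μ + (1 - θ) * ∫ y, f y ∂ν := by
  rw [integral_add_measure (hfμ.smul_measure ENNReal.ofReal_ne_top)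
    (hfν.smul_measure ENNReal.ofReal_ne_top), integral_smul_measure, integral_smul_measure,
    ENNReal.toReal_ofReal h0, ENNReal.toReal_ofReal (by linarith : (0:ℝ) ≤ 1 - θ)]
  simp [smul_eq_mul]

lemma st9_mix_map {Y Z : Type*} [MeasurableSpace Y] [MeasurableSpace Z]
    (μ ν : Measure Y) (f : Y → Z) (hf : Measurable f) (a b : ENNReal) :
    (a • μ + b • ν).map f = a • μ.map f + b • ν.map f := by
  rw [Measure.map_add _ _ hf, Measure.map_smul, Measure.map_smul]

end Mix

section Weak

variable {X : Type*} [MetricSpace X] [CompactSpace X] [Nonempty X]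
    [MeasurableSpace X] [BorelSpace X]

lemma st9_weak {c : X × X → ℝ} (hc : Continuous c) (hc0 : ∀ x y, 0 ≤ c (x, y))
    (hcd : ∀ x, c (x, x) = 0) {L : X → ℝ} (hL : Continuous L)
    {M : ℝ} (hM : ∀ x, |L x| ≤ M)
    (Pstar : Measure X) [IsProbabilityMeasure Pstar] {ρ : ℝ} (hρ : 0 < ρ)
    (P : Measure X) [IsProbabilityMeasure P] (hP : transportCost c P Pstar ≤ ρ)
    {α : ℝ} (hα : 0 ≤ α) :
    ∫ x, L x ∂P ≤ α * ρ + ∫ x', (⨆ x, (L x - α * c (x, x'))) ∂Pstar := by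
  refine le_of_forall_pos_le_add ?_
  intro ε hε
  have hε' : 0 < ε / (α + 1) := div_pos hε (by linarith)
  obtain ⟨γ, hγ, h1, h2, hcost⟩ := st9_tc_exists hc hP hε'
  haveI := hγ
  have hgmeas := st9_g_meas hc hL hc0 hM hα
  have hfst : ∫ x, L x ∂P = ∫ p, L p.1 ∂γ := by
    rw [← h1, integral_map measurable_fst.aemeasurable hL.aestronglyMeasurable]
  have hsnd : ∫ p, (⨆ x, (L x - α * c (x, p.2))) ∂γ
      = ∫ x', (⨆ x, (L x - α * c (x, x'))) ∂Pstar := by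
    rw [← h2, integral_map measurable_snd.aemeasurable hgmeas.aestronglyMeasurable]
  have ic : Integrable c γ := st9_cont_integrable hc γ
  have iL1 : Integrable (fun p : X × X => L p.1) γ :=
    st9_cont_integrable (hL.comp continuous_fst) γ
  have ig2 : Integrable (fun p : X × X => ⨆ x, (L x - α * c (x, p.2))) γ :=
    st9_bdd_integrable (hgmeas.comp measurable_snd)
      (fun p => st9_g_abs hc0 hcd hM hα p.2) γ
  have hpt : ∀ p : X × X, L p.1 - α * c p ≤ ⨆ x, (L x - α * c (x, p.2)) := by
    intro p
    have := le_ciSup (st9_g_bddAbove hc0 hM hα p.2) p.1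
    simpa using this
  have hmono : ∫ p, (L p.1 - α * c p) ∂γ ≤ ∫ p, (⨆ x, (L x - α * c (x, p.2))) ∂γ :=
    integral_mono (iL1.sub (ic.const_mul α)) ig2 hpt
  rw [integral_sub iL1 (ic.const_mul α), MeasureTheory.integral_const_mul] at hmono
  have hαc : α * ∫ p, c p ∂γ ≤ α * (ρ + ε / (α + 1)) :=
    mul_le_mul_of_nonneg_left (le_of_lt hcost) hα
  have hαε : α * (ε / (α + 1)) ≤ ε := by
    rw [mul_div_assoc']
    rw [div_le_iff₀ (by linarith : (0:ℝ) < α + 1)]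
    nlinarith
  rw [hfst]
  rw [hsnd] at hmono
  nlinarith [hmono, hαc, hαε]

end Weak

section Diag

variable {X : Type*} [MetricSpace X] [CompactSpace X] [Nonempty X]
    [MeasurableSpace X] [BorelSpace X]

lemma st9_diag {c : X × X → ℝ} (hc : Continuous c) (hcd : ∀ x, c (x, x) = 0)
    (P : Measure X) [IsProbabilityMeasure P] :
    ∃ γ : Measure (X × X), IsProbabilityMeasure γ ∧ γ.map Prod.fst = P ∧
      γ.map Prod.snd = P ∧ ∫ p, c p ∂γ = 0 := by
  have hmeas : Measurable fun x : X => (x, x) := by fun_prop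
  refine ⟨P.map fun x => (x, x), Measure.isProbabilityMeasure_map hmeas.aemeasurable, ?_, ?_, ?_⟩
  · rw [Measure.map_map measurable_fst hmeas]
    have : (Prod.fst ∘ fun x : X => (x, x)) = id := rfl
    rw [this, Measure.map_id]
  · rw [Measure.map_map measurable_snd hmeas]
    have : (Prod.snd ∘ fun x : X => (x, x)) = id := rfl
    rw [this, Measure.map_id]
  · rw [integral_map hmeas.aemeasurable hc.aestronglyMeasurable]
    simp [hcd]

end Diag

section Conc

variable {X : Type*} [MetricSpace X] [CompactSpace X] [Nonempty X]
    [MeasurableSpace X] [BorelSpace X]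

lemma st9_int_abs {L : X → ℝ} (hL : Continuous L) {M : ℝ} (hM : ∀ x, |L x| ≤ M)
    (P : Measure X) (hP : IsProbabilityMeasure P) : |∫ x, L x ∂P| ≤ M := by
  haveI := hP
  calc |∫ x, L x ∂P| = ‖∫ x, L x ∂P‖ := (Real.norm_eq_abs _).symm
    _ ≤ ∫ x, ‖L x‖ ∂P := norm_integral_le_integral_norm L
    _ = ∫ x, |L x| ∂P := by simp [Real.norm_eq_abs]
    _ ≤ ∫ _x, M ∂P :=
      integral_mono ((st9_cont_integrable hL P).abs) (integrable_const M) hM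
    _ = M := by simp

set_option maxHeartbeats 1000000 in
lemma st9_conc {c : X × X → ℝ} (hc : Continuous c) (hc0 : ∀ x y, 0 ≤ c (x, y))
    (hcd : ∀ x, c (x, x) = 0) {L : X → ℝ} (hL : Continuous L)
    {M : ℝ} (hM0 : 0 ≤ M) (hM : ∀ x, |L x| ≤ M)
    (Pstar : Measure X) [IsProbabilityMeasure Pstar] {ρ : ℝ} (hρ : 0 < ρ)
    (A : ℝ → Set ℝ)
    (hA : A = fun t => {r | ∃ P : Measure X, IsProbabilityMeasure P ∧
      transportCost c P Pstar ≤ t ∧ r = ∫ x, L x ∂P})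
    {a b : ℝ} (ha : 0 ≤ a) (hab : a < ρ) (hb : ρ < b) :
    (b - ρ) * sSup (A a) + (ρ - a) * sSup (A b) ≤ (b - a) * sSup (A ρ) := by
  have hAne : ∀ t, 0 ≤ t → (A t).Nonempty := by
    intro t ht
    refine ⟨∫ x, L x ∂Pstar, ?_⟩
    rw [hA]
    simp only [Set.mem_setOf_eq]
    exact ⟨Pstar, inferInstance, le_trans (st9_tc_self hc hc0 hcd Pstar) ht, rfl⟩
  have hint_abs : ∀ (P : Measure X), IsProbabilityMeasure P → |∫ x, L x ∂P| ≤ M :=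
    fun P hP => st9_int_abs hL hM P hP
  have hAbdd : ∀ t, BddAbove (A t) := by
    intro t
    refine ⟨M, fun r hr => ?_⟩
    rw [hA] at hr
    obtain ⟨P, hP, -, rfl⟩ := hr
    exact le_trans (le_abs_self _) (hint_abs P hP)
  have hba : 0 < b - a := by linarith
  obtain ⟨lam, hlam⟩ : ∃ lam : ℝ, lam = (b - ρ) / (b - a) := ⟨_, rfl⟩
  obtain ⟨mu, hmu⟩ : ∃ mu : ℝ, mu = (ρ - a) / (b - a) := ⟨_, rfl⟩
  have hlam0 : 0 ≤ lam := hlam ▸ div_nonneg (by linarith) (le_of_lt hba)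
  have hlam1 : lam ≤ 1 := by rw [hlam, div_le_one hba]; linarith
  have hmusum : mu = 1 - lam := by rw [hmu, hlam]; field_simp; ring
  have hlamab : lam * a + mu * b = ρ := by
    rw [hmu, hlam]; field_simp; ring
  have key : lam * sSup (A a) + mu * sSup (A b) ≤ sSup (A ρ) := by
    refine le_of_forall_pos_le_add ?_
    intro δ hδ
    obtain ⟨K, hK⟩ : ∃ K : ℝ, K = 1 + 2 * M / ρ := ⟨_, rfl⟩
    have hK1 : 1 ≤ K := by
      rw [hK]
      have : 0 ≤ 2 * M / ρ := by positivity
      linarith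
    have hKpos : 0 < K := by linarith
    obtain ⟨ε₁, hε₁def⟩ : ∃ e : ℝ, e = δ / K := ⟨_, rfl⟩
    have hε₁ : 0 < ε₁ := hε₁def ▸ div_pos hδ hKpos
    have hε₁K : ε₁ * K = δ := by
      rw [hε₁def, div_mul_eq_mul_div, mul_div_assoc, div_self (ne_of_gt hKpos), mul_one]
    obtain ⟨r₁, hr₁A, hr₁⟩ := exists_lt_of_lt_csSup (hAne a ha)
      (show sSup (A a) - ε₁ < sSup (A a) by linarith)
    obtain ⟨r₂, hr₂A, hr₂⟩ := exists_lt_of_lt_csSup (hAne b (by linarith))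
      (show sSup (A b) - ε₁ < sSup (A b) by linarith)
    rw [hA] at hr₁A hr₂A
    obtain ⟨P₁, hP₁, hPc₁, rfl⟩ := hr₁A
    obtain ⟨P₂, hP₂, hPc₂, rfl⟩ := hr₂A
    haveI := hP₁; haveI := hP₂
    obtain ⟨γ₁, hγ₁, h1f, h1s, hcost₁⟩ := st9_tc_exists hc hPc₁ hε₁
    obtain ⟨γ₂, hγ₂, h2f, h2s, hcost₂⟩ := st9_tc_exists hc hPc₂ hε₁
    haveI := hγ₁; haveI := hγ₂
    obtain ⟨γ₀, hγ₀, h0f, h0s, hcost₀⟩ := st9_diag hc hcd Pstar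
    haveI := hγ₀
    -- first mixture
    obtain ⟨P₁₂, hP12def⟩ : ∃ Q : Measure X,
      Q = ENNReal.ofReal lam • P₁ + ENNReal.ofReal (1 - lam) • P₂ := ⟨_, rfl⟩
    obtain ⟨γ₁₂, hγ12def⟩ : ∃ q : Measure (X × X),
      q = ENNReal.ofReal lam • γ₁ + ENNReal.ofReal (1 - lam) • γ₂ := ⟨_, rfl⟩
    haveI hP₁₂ : IsProbabilityMeasure P₁₂ := hP12def ▸ st9_mix_prob _ _ hP₁ hP₂ hlam0 hlam1
    haveI hγ₁₂ : IsProbabilityMeasure γ₁₂ := hγ12def ▸ st9_mix_prob _ _ hγ₁ hγ₂ hlam0 hlam1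
    have h12f : γ₁₂.map Prod.fst = P₁₂ := by
      rw [hγ12def, hP12def, st9_mix_map _ _ _ measurable_fst, h1f, h2f]
    have h12s : γ₁₂.map Prod.snd = Pstar := by
      rw [hγ12def, st9_mix_map _ _ _ measurable_snd, h1s, h2s, ← add_smul,
        ← ENNReal.ofReal_add hlam0 (by linarith)]
      norm_num
    have hc12 : ∫ p, c p ∂γ₁₂ = lam * ∫ p, c p ∂γ₁ + (1 - lam) * ∫ p, c p ∂γ₂ := by
      rw [hγ12def]
      exact st9_mix_int _ _ _ (st9_cont_integrable hc γ₁) (st9_cont_integrable hc γ₂)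
        hlam0 hlam1
    have hL12 : ∫ x, L x ∂P₁₂ = lam * ∫ x, L x ∂P₁ + (1 - lam) * ∫ x, L x ∂P₂ := by
      rw [hP12def]
      exact st9_mix_int _ _ _ (st9_cont_integrable hL P₁) (st9_cont_integrable hL P₂)
        hlam0 hlam1
    -- second mixture
    obtain ⟨θ, hθdef⟩ : ∃ θ : ℝ, θ = ε₁ / (ρ + ε₁) := ⟨_, rfl⟩
    have hρε : 0 < ρ + ε₁ := by linarith
    have hθ0 : 0 ≤ θ := hθdef ▸ le_of_lt (div_pos hε₁ hρε)
    have hθ1 : θ ≤ 1 := by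
      rw [hθdef, div_le_one hρε]; linarith
    obtain ⟨P, hPdef⟩ : ∃ Q : Measure X,
      Q = ENNReal.ofReal θ • Pstar + ENNReal.ofReal (1 - θ) • P₁₂ := ⟨_, rfl⟩
    obtain ⟨γ, hγdef⟩ : ∃ q : Measure (X × X),
      q = ENNReal.ofReal θ • γ₀ + ENNReal.ofReal (1 - θ) • γ₁₂ := ⟨_, rfl⟩
    haveI hPprob : IsProbabilityMeasure P :=
      hPdef ▸ st9_mix_prob _ _ inferInstance hP₁₂ hθ0 hθ1
    haveI hγprob : IsProbabilityMeasure γ := hγdef ▸ st9_mix_prob _ _ hγ₀ hγ₁₂ hθ0 hθ1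
    have hfP : γ.map Prod.fst = P := by
      rw [hγdef, hPdef, st9_mix_map _ _ _ measurable_fst, h0f, h12f]
    have hsP : γ.map Prod.snd = Pstar := by
      rw [hγdef, st9_mix_map _ _ _ measurable_snd, h0s, h12s, ← add_smul,
        ← ENNReal.ofReal_add hθ0 (by linarith)]
      norm_num
    have hcP : ∫ p, c p ∂γ = θ * ∫ p, c p ∂γ₀ + (1 - θ) * ∫ p, c p ∂γ₁₂ := by
      rw [hγdef]
      exact st9_mix_int _ _ _ (st9_cont_integrable hc γ₀) (st9_cont_integrable hc γ₁₂) hθ0 hθ1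
    have hLP : ∫ x, L x ∂P = θ * ∫ x, L x ∂Pstar + (1 - θ) * ∫ x, L x ∂P₁₂ := by
      rw [hPdef]
      exact st9_mix_int _ _ _ (st9_cont_integrable hL Pstar) (st9_cont_integrable hL P₁₂)
        hθ0 hθ1
    -- the mixture is feasible at radius ρ
    have hc12le : ∫ p, c p ∂γ₁₂ ≤ ρ + ε₁ := by
      rw [hc12]
      have e1 : lam * ∫ p, c p ∂γ₁ ≤ lam * (a + ε₁) :=
        mul_le_mul_of_nonneg_left (le_of_lt hcost₁) hlam0
      have e2 : (1 - lam) * ∫ p, c p ∂γ₂ ≤ (1 - lam) * (b + ε₁) :=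
        mul_le_mul_of_nonneg_left (le_of_lt hcost₂) (by linarith)
      have e3 : lam * (a + ε₁) + (1 - lam) * (b + ε₁) = ρ + ε₁ := by
        have h4 : lam * a + (1 - lam) * b = ρ := by rw [← hmusum]; exact hlamab
        linear_combination h4
      linarith
    have hθρ : (1 - θ) * (ρ + ε₁) = ρ := by
      rw [hθdef]
      field_simp
      ring
    have hcγ : ∫ p, c p ∂γ ≤ ρ := by
      rw [hcP, hcost₀, mul_zero, zero_add]
      calc (1 - θ) * ∫ p, c p ∂γ₁₂ ≤ (1 - θ) * (ρ + ε₁) :=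
            mul_le_mul_of_nonneg_left hc12le (by linarith)
        _ = ρ := hθρ
    have hPfeas : transportCost c P Pstar ≤ ρ :=
      le_trans (st9_tc_le hc0 γ hγprob hfP hsP) hcγ
    have hPmem : ∫ x, L x ∂P ∈ A ρ := by
      rw [hA]
      simp only [Set.mem_setOf_eq]
      exact ⟨P, hPprob, hPfeas, rfl⟩
    have hPle : ∫ x, L x ∂P ≤ sSup (A ρ) := le_csSup (hAbdd ρ) hPmem
    -- numerical estimates
    have habs0 : |∫ x, L x ∂Pstar| ≤ M := hint_abs Pstar inferInstance
    have hv : |∫ x, L x ∂P₁₂| ≤ M := hint_abs P₁₂ hP₁₂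
    have hθle : θ ≤ ε₁ / ρ := by
      rw [hθdef, div_le_div_iff₀ hρε hρ]
      nlinarith
    have hr₁' : sSup (A a) ≤ ∫ x, L x ∂P₁ + ε₁ := by linarith
    have hr₂' : sSup (A b) ≤ ∫ x, L x ∂P₂ + ε₁ := by linarith
    have hLPge : ∫ x, L x ∂P ≥ ∫ x, L x ∂P₁₂ - θ * (2 * M) := by
      rw [hLP]
      have h1 : -M ≤ ∫ x, L x ∂Pstar := by
        have := abs_le.mp habs0; linarith [this.1]
      have h2 : ∫ x, L x ∂P₁₂ ≤ M := by
        have := abs_le.mp hv; linarith [this.2]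
      nlinarith [hθ0, hθ1]
    have hθ2M : θ * (2 * M) ≤ ε₁ * (2 * M) / ρ := by
      calc θ * (2 * M) ≤ (ε₁ / ρ) * (2 * M) :=
            mul_le_mul_of_nonneg_right hθle (by linarith)
        _ = ε₁ * (2 * M) / ρ := by ring
    have hfinal : lam * sSup (A a) + mu * sSup (A b) ≤ ∫ x, L x ∂P₁₂ + ε₁ := by
      rw [hL12, hmusum]
      have e1 : lam * sSup (A a) ≤ lam * (∫ x, L x ∂P₁ + ε₁) :=
        mul_le_mul_of_nonneg_left hr₁' hlam0
      have e2 : (1 - lam) * sSup (A b) ≤ (1 - lam) * (∫ x, L x ∂P₂ + ε₁) :=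
        mul_le_mul_of_nonneg_left hr₂' (by linarith)
      nlinarith [e1, e2]
    have hδeq : ε₁ + ε₁ * (2 * M) / ρ = δ := by
      rw [← hε₁K, hK]
      field_simp
    linarith [hfinal, hLPge, hPle, hθ2M]
  have e1 : lam * (b - a) = b - ρ := by rw [hlam]; field_simp
  have e2 : mu * (b - a) = ρ - a := by rw [hmu]; field_simp
  calc (b - ρ) * sSup (A a) + (ρ - a) * sSup (A b)
      = (b - a) * (lam * sSup (A a) + mu * sSup (A b)) := by
        rw [← e1, ← e2]; ring
    _ ≤ (b - a) * sSup (A ρ) := mul_le_mul_of_nonneg_left key (le_of_lt hba)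

end Conc

set_option maxHeartbeats 1000000 in
/-- strong duality, equation (A.7). For a nonempty compact
metric space `X`, a continuous nonnegative cost `c` vanishing on the diagonal,
continuous `L`, a Borel probability measure `P*` and radius `ρ > 0`:
`sup_{W_c(P, P*) ≤ ρ} ∫ L dP = inf_{α ≥ 0} (α·ρ + ∫ max_x (L(x) − α·c(x, x')) dP*(x'))`. -/
theorem stmt9 {X : Type*} [MetricSpace X] [CompactSpace X] [Nonempty X]
    [MeasurableSpace X] [BorelSpace X]
    (c : X × X → ℝ) (hc : Continuous c)
    (hc0 : ∀ x y, 0 ≤ c (x, y)) (hcd : ∀ x, c (x, x) = 0)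
    (L : X → ℝ) (hL : Continuous L)
    (Pstar : Measure X) [IsProbabilityMeasure Pstar] (ρ : ℝ) (hρ : 0 < ρ) :
    sSup {r : ℝ | ∃ P : Measure X, IsProbabilityMeasure P ∧
        transportCost c P Pstar ≤ ρ ∧ r = ∫ x, L x ∂P} =
      sInf {r : ℝ | ∃ α : ℝ, 0 ≤ α ∧
        r = α * ρ + ∫ x', (⨆ x, (L x - α * c (x, x'))) ∂Pstar} := by
  obtain ⟨M, hM0, hM⟩ := st9_bound hL
  obtain ⟨A, hA⟩ : ∃ A : ℝ → Set ℝ, A = fun t => {r : ℝ | ∃ P : Measure X,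
      IsProbabilityMeasure P ∧ transportCost c P Pstar ≤ t ∧ r = ∫ x, L x ∂P} := ⟨_, rfl⟩
  obtain ⟨B, hB⟩ : ∃ B : Set ℝ, B = {r : ℝ | ∃ α : ℝ, 0 ≤ α ∧
      r = α * ρ + ∫ x', (⨆ x, (L x - α * c (x, x'))) ∂Pstar} := ⟨_, rfl⟩
  have hgoalA : {r : ℝ | ∃ P : Measure X, IsProbabilityMeasure P ∧
      transportCost c P Pstar ≤ ρ ∧ r = ∫ x, L x ∂P} = A ρ := by rw [hA]
  have hgoalB : {r : ℝ | ∃ α : ℝ, 0 ≤ α ∧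
      r = α * ρ + ∫ x', (⨆ x, (L x - α * c (x, x'))) ∂Pstar} = B := hB.symm
  rw [hgoalA, hgoalB]
  -- basic facts about A
  have hAne : ∀ t, 0 ≤ t → (A t).Nonempty := by
    intro t ht
    refine ⟨∫ x, L x ∂Pstar, ?_⟩
    rw [hA]
    simp only [Set.mem_setOf_eq]
    exact ⟨Pstar, inferInstance, le_trans (st9_tc_self hc hc0 hcd Pstar) ht, rfl⟩
  have hint_abs : ∀ (P : Measure X), IsProbabilityMeasure P → |∫ x, L x ∂P| ≤ M :=
    fun P hP => st9_int_abs hL hM P hP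
  have hAbdd : ∀ t, BddAbove (A t) := by
    intro t
    refine ⟨M, fun r hr => ?_⟩
    rw [hA] at hr
    obtain ⟨P, hP, -, rfl⟩ := hr
    exact le_trans (le_abs_self _) (hint_abs P hP)
  have hmono : ∀ s t, 0 ≤ s → s ≤ t → sSup (A s) ≤ sSup (A t) := by
    intro s t hs hst
    refine csSup_le_csSup (hAbdd t) (hAne s hs) ?_
    intro r hr
    rw [hA] at hr ⊢
    obtain ⟨P, hP, hfeas, rfl⟩ := hr
    exact ⟨P, hP, le_trans hfeas hst, rfl⟩
  -- facts about B
  have hgint : ∀ α : ℝ, 0 ≤ α →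
      Integrable (fun x' => ⨆ x, (L x - α * c (x, x'))) Pstar := fun α hα =>
    st9_bdd_integrable (st9_g_meas hc hL hc0 hM hα)
      (fun x' => st9_g_abs hc0 hcd hM hα x') Pstar
  have hBne : B.Nonempty := by
    rw [hB]
    exact ⟨0 * ρ + ∫ x', (⨆ x, (L x - 0 * c (x, x'))) ∂Pstar, 0, le_refl 0, rfl⟩
  have hBlow : BddBelow B := by
    refine ⟨-M, fun r hr => ?_⟩
    rw [hB] at hr
    obtain ⟨α, hα, rfl⟩ := hr
    have h1 : 0 ≤ α * ρ := mul_nonneg hα (le_of_lt hρ)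
    have h2 : ∫ x', (-M : ℝ) ∂Pstar ≤ ∫ x', (⨆ x, (L x - α * c (x, x'))) ∂Pstar := by
      refine integral_mono (integrable_const _) (hgint α hα) ?_
      intro x'
      have := abs_le.mp (st9_g_abs hc0 hcd hM hα x')
      exact this.1
    have h3 : ∫ x', (-M : ℝ) ∂Pstar = -M := by simp
    linarith [h2, h3.symm.le, h3.le]
  -- weak duality
  have hweak : sSup (A ρ) ≤ sInf B := by
    refine csSup_le (hAne ρ (le_of_lt hρ)) ?_
    intro r hr
    refine le_csInf hBne ?_
    intro s hs
    rw [hA] at hr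
    rw [hB] at hs
    obtain ⟨P, hP, hfeas, rfl⟩ := hr
    obtain ⟨α, hα, rfl⟩ := hs
    haveI := hP
    exact st9_weak hc hc0 hcd hL hM Pstar hρ P hfeas hα
  -- strong duality
  obtain ⟨S, hS⟩ : ∃ S : Set ℝ, S = {s : ℝ | ∃ t : ℝ, ρ < t ∧
      s = (sSup (A t) - sSup (A ρ)) / (t - ρ)} := ⟨_, rfl⟩
  have hSne : S.Nonempty := by
    rw [hS]
    exact ⟨(sSup (A (ρ + 1)) - sSup (A ρ)) / (ρ + 1 - ρ), ρ + 1, by linarith, rfl⟩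
  have hSbdd : BddAbove S := by
    refine ⟨(sSup (A ρ) - sSup (A (ρ / 2))) / (ρ / 2), fun s hs => ?_⟩
    rw [hS] at hs
    obtain ⟨t, ht, rfl⟩ := hs
    have hconc := st9_conc hc hc0 hcd hL hM0 hM Pstar hρ A hA
      (a := ρ / 2) (b := t) (by linarith) (by linarith) ht
    rw [div_le_div_iff₀ (by linarith) (by linarith)]
    nlinarith [hconc]
  obtain ⟨α, hαdef⟩ : ∃ α : ℝ, α = sSup S := ⟨_, rfl⟩
  have hα0 : 0 ≤ α := by
    have hel : (sSup (A (ρ + 1)) - sSup (A ρ)) / (ρ + 1 - ρ) ∈ S := by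
      rw [hS]; exact ⟨ρ + 1, by linarith, rfl⟩
    have h1 : 0 ≤ (sSup (A (ρ + 1)) - sSup (A ρ)) / (ρ + 1 - ρ) := by
      have := hmono ρ (ρ + 1) (le_of_lt hρ) (by linarith)
      have h2 : (0:ℝ) < ρ + 1 - ρ := by linarith
      exact div_nonneg (by linarith) (by linarith)
    rw [hαdef]
    exact le_trans h1 (le_csSup hSbdd hel)
  have hsupg : ∀ t, 0 ≤ t → sSup (A t) ≤ sSup (A ρ) + α * (t - ρ) := by
    intro t ht
    rcases lt_trichotomy t ρ with h | h | h
    · -- t < ρ : α is at most the left slope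
      have hαle : α ≤ (sSup (A ρ) - sSup (A t)) / (ρ - t) := by
        rw [hαdef]
        refine csSup_le hSne ?_
        intro s hs
        rw [hS] at hs
        obtain ⟨b, hb, rfl⟩ := hs
        have hconc := st9_conc hc hc0 hcd hL hM0 hM Pstar hρ A hA
          (a := t) (b := b) ht h hb
        rw [div_le_div_iff₀ (by linarith) (by linarith)]
        nlinarith [hconc]
      have hd : (0:ℝ) < ρ - t := by linarith
      have h2 : α * (ρ - t) ≤ sSup (A ρ) - sSup (A t) := by
        have h3 := mul_le_mul_of_nonneg_right hαle (le_of_lt hd)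
        rwa [div_mul_cancel₀ _ (ne_of_gt hd)] at h3
      nlinarith [h2]
    · subst h; simp
    · have hel : (sSup (A t) - sSup (A ρ)) / (t - ρ) ∈ S := by
        rw [hS]; exact ⟨t, h, rfl⟩
      have h1 : (sSup (A t) - sSup (A ρ)) / (t - ρ) ≤ α := hαdef ▸ le_csSup hSbdd hel
      rw [div_le_iff₀ (by linarith : (0:ℝ) < t - ρ)] at h1
      nlinarith [h1]
  -- conclude
  have hstrong : α * ρ + (∫ x', (⨆ x, (L x - α * c (x, x'))) ∂Pstar) ≤ sSup (A ρ) := by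
    refine le_of_forall_pos_le_add ?_
    intro δ hδ
    obtain ⟨P, γ, hP, hγ, hf, hs, hnet⟩ := st9_net hc hc0 hcd hL hM Pstar hα0 hδ
    haveI := hP; haveI := hγ
    obtain ⟨t, htdef⟩ : ∃ t : ℝ, t = ∫ p, c p ∂γ := ⟨_, rfl⟩
    have ht0 : 0 ≤ t := htdef ▸ integral_nonneg (st9_c_nonneg hc0)
    have hfeas : transportCost c P Pstar ≤ t := htdef ▸ st9_tc_le hc0 γ hγ hf hs
    have hmem : ∫ x, L x ∂P ∈ A t := by
      rw [hA]
      simp only [Set.mem_setOf_eq]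
      exact ⟨P, hP, hfeas, rfl⟩
    have hle : ∫ x, L x ∂P ≤ sSup (A t) := le_csSup (hAbdd t) hmem
    have hsg := hsupg t ht0
    have hexp : α * (t - ρ) = α * t - α * ρ := by ring
    rw [← htdef] at hnet
    linarith [hnet, hle, hsg, hexp]
  have hBel : α * ρ + (∫ x', (⨆ x, (L x - α * c (x, x'))) ∂Pstar) ∈ B := by
    rw [hB]
    exact ⟨α, hα0, rfl⟩
  have hstrong2 : sInf B ≤ sSup (A ρ) := le_trans (csInf_le hBlow hBel) hstrong
  exact le_antisymm hweak hstrong2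
end
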